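/- For each T with 0 < T < T_c there exists a unique Y = f(T) with 0 < Y < 2Δ₀² such that ∫_{2k_B T_c ε}^{ℏω_D} (1/√(ξ²+f(T))) tanh(√(ξ²+f(T))/(2k_B T)) dξ = 1/(U₀N₀), where T_c is defined by ∫_{ε}^{ℏω_D/(2k_B T_c)} tanh(η)/η dη = 1/(U₀N₀). -/

import Mathlib

/-!
Let `G(Y) = ∫_a^b tanh(√(ξ² + Y)/c) / √(ξ² + Y) dξ` with `a = 2k_BT_cε`, `b = ℏω_D` and
`c = 2k_BT`. It is continuous on `[0, ∞)`, and strictly decreasing there because `tanh u / u` is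
strictly decreasing on `(0, ∞)`. The substitution `ξ = 2k_BT_c η` turns the defining equation of
`T_c` into `∫_a^b tanh(ξ/(2k_BT_c)) / ξ dξ = 1/(U₀N₀)`, so `T < T_c` gives `G(0) > 1/(U₀N₀)`.
Bounding `tanh` by `1` gives `G(Y) < arsinh(b/√Y)`, which is below `1/(U₀N₀)` as soon as
`√Y > Δ₀`, e.g. at `Y = 2Δ₀²`. The intermediate value theorem and strict monotonicity conclude.
-/

open Real intervalIntegral Set

namespace Real

@[fun_prop]
theorem continuous_tanh : Continuous tanh := by
  simp only [funext tanh_eq_sinh_div_cosh]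
  exact continuous_sinh.div continuous_cosh fun x => (cosh_pos x).ne'

theorem hasDerivAt_tanh (x : ℝ) : HasDerivAt tanh (1 / cosh x ^ 2) x := by
  have h := (hasDerivAt_sinh x).div (hasDerivAt_cosh x) (cosh_pos x).ne'
  rw [show sinh / cosh = tanh from funext fun y => (tanh_eq_sinh_div_cosh y).symm] at h
  refine h.congr_deriv ?_
  rw [← cosh_sq_sub_sinh_sq x]
  ring

theorem tanh_strictMono : StrictMono tanh := by
  intro x y h
  rw [tanh_eq_sinh_div_cosh, tanh_eq_sinh_div_cosh, div_lt_div_iff₀ (cosh_pos x) (cosh_pos y),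
    ← sub_neg, mul_comm (sinh y), ← sinh_sub]
  exact sinh_neg_iff.2 (sub_neg.2 h)

theorem tanh_pos {x : ℝ} (hx : 0 < x) : 0 < tanh x := by
  simpa only [tanh_zero] using tanh_strictMono hx

theorem strictAntiOn_tanh_div_self : StrictAntiOn (fun u => tanh u / u) (Ioi 0) := by
  refine strictAntiOn_of_deriv_neg (convex_Ioi 0)
    (continuous_tanh.continuousOn.div continuousOn_id fun x hx => (ne_of_gt hx)) ?_
  intro x hx
  rw [interior_Ioi] at hx
  have hd : HasDerivAt (fun u => tanh u / u) ((1 / cosh x ^ 2 * x - tanh x * 1) / x ^ 2) x :=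
    (hasDerivAt_tanh x).div (hasDerivAt_id x) (ne_of_gt hx)
  rw [hd.deriv]
  refine div_neg_of_neg_of_pos ?_ (pow_pos hx 2)
  have hsc : x < sinh x * cosh x := by
    nlinarith [self_lt_sinh_iff.2 hx, one_le_cosh x, sinh_pos_iff.2 hx]
  rw [tanh_eq_sinh_div_cosh, sub_neg, mul_one, div_mul_eq_mul_div,
    div_lt_div_iff₀ (by positivity) (cosh_pos x)]
  nlinarith [cosh_pos x]

theorem strictAntiOn_tanh_div_div_self {c : ℝ} (hc : 0 < c) :
    StrictAntiOn (fun s => tanh (s / c) / s) (Ioi 0) := by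
  intro s hs t ht hst
  have key : tanh (t / c) / (t / c) < tanh (s / c) / (s / c) :=
    strictAntiOn_tanh_div_self (div_pos hs hc) (div_pos ht hc) (by gcongr)
  rw [div_div_eq_mul_div, div_div_eq_mul_div, mul_div_right_comm, mul_div_right_comm] at key
  exact lt_of_mul_lt_mul_right key hc.le

theorem continuousOn_tanh_div_div_self {a d : ℝ} (ha : 0 < a) :
    ContinuousOn (fun ξ => tanh (ξ / d) / ξ) (Ici a) :=
  (continuous_tanh.comp (continuous_id.div_const d)).continuousOn.div continuousOn_id
    fun _ hξ => (ha.trans_le hξ).ne'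

end Real

namespace intervalIntegral

theorem integral_lt_integral_of_continuousOn_of_lt {f g : ℝ → ℝ} {a b : ℝ} (hab : a < b)
    (hf : ContinuousOn f (Icc a b)) (hg : ContinuousOn g (Icc a b))
    (hlt : ∀ x ∈ Icc a b, f x < g x) : ∫ x in a..b, f x < ∫ x in a..b, g x := by
  have hb : b ∈ Icc a b := right_mem_Icc.2 hab.le
  exact integral_lt_integral_of_continuousOn_of_le_of_exists_lt hab hf hg
    (fun x hx => (hlt x (Ioc_subset_Icc_self hx)).le) ⟨b, hb, hlt b hb⟩

end intervalIntegral

theorem integral_tanh_div_comp {d : ℝ} (hd : d ≠ 0) (a b : ℝ) :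
    ∫ ξ in a..b, tanh (ξ / d) / ξ = ∫ η in a / d..b / d, tanh η / η := by
  rw [← inv_smul_integral_comp_div, smul_eq_mul, ← integral_const_mul]
  refine integral_congr fun ξ _ => ?_
  simp only [div_div_eq_mul_div]
  field_simp

theorem integral_tanh_div_pos {a b d : ℝ} (ha : 0 < a) (hab : a < b) (hd : 0 < d) :
    0 < ∫ ξ in a..b, tanh (ξ / d) / ξ := by
  refine intervalIntegral_pos_of_pos_on ?_ (fun ξ hξ => ?_) hab
  · exact ((continuousOn_tanh_div_div_self ha).mono Icc_subset_Ici_self).intervalIntegrable_of_Icc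
      hab.le
  · have hξ : 0 < ξ := ha.trans hξ.1
    exact div_pos (tanh_pos (div_pos hξ hd)) hξ

theorem continuous_one_div_sqrt_sq_add {Y : ℝ} (hY : 0 < Y) :
    Continuous fun ξ : ℝ => 1 / √(ξ ^ 2 + Y) :=
  continuous_const.div (by fun_prop) fun ξ => (sqrt_pos.2 (by positivity)).ne'

theorem integral_one_div_sqrt_sq_add {Y : ℝ} (hY : 0 < Y) (a b : ℝ) :
    ∫ ξ in a..b, 1 / √(ξ ^ 2 + Y) = arsinh (b / √Y) - arsinh (a / √Y) := by
  have hsqY : 0 < √Y := sqrt_pos.2 hY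
  refine integral_eq_sub_of_hasDerivAt (f := fun ξ => arsinh (ξ / √Y)) (fun ξ _ => ?_) ?_
  · have h := ((hasDerivAt_id ξ).div_const √Y).arsinh
    refine h.congr_deriv ?_
    have hsq : √(1 + (id ξ / √Y) ^ 2) * √Y = √(ξ ^ 2 + Y) := by
      rw [← sqrt_mul (by positivity), div_pow, sq_sqrt hY.le, id]
      field_simp
      ring_nf
    rw [smul_eq_mul, ← hsq]
    field_simp
  · exact (continuous_one_div_sqrt_sq_add hY).intervalIntegrable a b

/-- The integrand of the gap equation, `Y = Δ²` being the squared gap and `c = 2 k_B T`. -/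
noncomputable def gapIntegrand (c Y ξ : ℝ) : ℝ := 1 / √(ξ ^ 2 + Y) * tanh (√(ξ ^ 2 + Y) / c)

noncomputable def gapIntegral (a b c Y : ℝ) : ℝ := ∫ ξ in a..b, gapIntegrand c Y ξ

section GapIntegral

variable {a b c Y : ℝ}

-- clamping both arguments keeps `ξ ^ 2 + Y` away from the singularity of `1 / √·` at `0`
theorem continuous_gapIntegrand_max (ha : 0 < a) :
    Continuous (Function.uncurry fun Y ξ => gapIntegrand c (max Y 0) (max ξ a)) := by
  have hpos : ∀ p : ℝ × ℝ, 0 < max p.2 a ^ 2 + max p.1 0 := fun p => by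
    have := sq_pos_of_pos (ha.trans_le (le_max_right p.2 a))
    have := le_max_right p.1 0
    positivity
  unfold Function.uncurry gapIntegrand
  exact (continuous_const.div (by fun_prop) fun p => (sqrt_pos.2 (hpos p)).ne').mul
    (by fun_prop)

theorem continuousOn_gapIntegrand (ha : 0 < a) (hY : 0 ≤ Y) :
    ContinuousOn (gapIntegrand c Y) (Ici a) := by
  refine ((continuous_gapIntegrand_max (c := c) ha).comp
    (Continuous.prodMk_right Y)).continuousOn.congr fun ξ hξ => ?_
  simp only [Function.comp, Function.uncurry_apply_pair, max_eq_left hY,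
    max_eq_left (mem_Ici.1 hξ)]

theorem continuousOn_gapIntegral (ha : 0 < a) (hab : a ≤ b) :
    ContinuousOn (gapIntegral a b c) (Ici 0) := by
  refine (continuous_parametric_intervalIntegral_of_continuous' (μ := MeasureTheory.volume)
    (continuous_gapIntegrand_max (c := c) ha) a b).continuousOn.congr fun Y hY => ?_
  refine integral_congr fun ξ hξ => ?_
  rw [uIcc_of_le hab] at hξ
  simp only [max_eq_left (mem_Ici.1 hY), max_eq_left hξ.1]

theorem gapIntegrand_strictAntiOn {ξ : ℝ} (hc : 0 < c) (hξ : 0 < ξ) :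
    StrictAntiOn (fun Y => gapIntegrand c Y ξ) (Ici 0) := by
  intro Y₁ hY₁ Y₂ _ hY
  have hpos : 0 < ξ ^ 2 + Y₁ := by have := mem_Ici.1 hY₁; positivity
  have hsqrt : √(ξ ^ 2 + Y₁) < √(ξ ^ 2 + Y₂) := sqrt_lt_sqrt hpos.le (by linarith)
  simpa only [gapIntegrand, one_div_mul_eq_div] using
    strictAntiOn_tanh_div_div_self hc (sqrt_pos.2 hpos) ((sqrt_pos.2 hpos).trans hsqrt) hsqrt

theorem gapIntegral_strictAntiOn (ha : 0 < a) (hab : a < b) (hc : 0 < c) :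
    StrictAntiOn (gapIntegral a b c) (Ici 0) := by
  intro Y₁ hY₁ Y₂ hY₂ hY
  exact integral_lt_integral_of_continuousOn_of_lt hab
    ((continuousOn_gapIntegrand ha hY₂).mono Icc_subset_Ici_self)
    ((continuousOn_gapIntegrand ha hY₁).mono Icc_subset_Ici_self) fun ξ hξ =>
    gapIntegrand_strictAntiOn hc (ha.trans_le hξ.1) hY₁ hY₂ hY

theorem gapIntegrand_zero {ξ : ℝ} (hξ : 0 ≤ ξ) : gapIntegrand c 0 ξ = tanh (ξ / c) / ξ := by
  rw [gapIntegrand, add_zero, sqrt_sq hξ, one_div_mul_eq_div]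

theorem integral_tanh_div_lt_gapIntegral_zero {d : ℝ} (ha : 0 < a) (hab : a < b) (hc : 0 < c)
    (hcd : c < d) : ∫ ξ in a..b, tanh (ξ / d) / ξ < gapIntegral a b c 0 := by
  refine integral_lt_integral_of_continuousOn_of_lt hab
    ((continuousOn_tanh_div_div_self ha).mono Icc_subset_Ici_self)
    ((continuousOn_gapIntegrand ha le_rfl).mono Icc_subset_Ici_self) fun ξ hξ => ?_
  have hξ : 0 < ξ := ha.trans_le hξ.1
  rw [gapIntegrand_zero hξ.le]
  exact div_lt_div_of_pos_right (tanh_strictMono (div_lt_div_of_pos_left hξ hc hcd)) hξ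

theorem gapIntegral_lt_arsinh (ha : 0 < a) (hab : a ≤ b) (hY : 0 < Y) :
    gapIntegral a b c Y < arsinh (b / √Y) := by
  have hle : gapIntegral a b c Y ≤ ∫ ξ in a..b, 1 / √(ξ ^ 2 + Y) := by
    refine integral_mono_on hab
      (((continuousOn_gapIntegrand ha hY.le).mono Icc_subset_Ici_self).intervalIntegrable_of_Icc
        hab)
      ((continuous_one_div_sqrt_sq_add hY).intervalIntegrable a b) fun ξ _ => ?_
    exact mul_le_of_le_one_right (by positivity) (tanh_lt_one _).le
  rw [integral_one_div_sqrt_sq_add hY] at hle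
  have : 0 < arsinh (a / √Y) := arsinh_pos_iff.2 (by positivity)
  linarith

end GapIntegral

theorem arsinh_div_sqrt_lt {b L Y : ℝ} (hb : 0 < b) (hL : 0 < L) (hY : (b / sinh L) ^ 2 < Y) :
    arsinh (b / √Y) < L := by
  have hsinh : 0 < sinh L := sinh_pos_iff.2 hL
  have hsqrt : b / sinh L < √Y := lt_sqrt_of_sq_lt hY
  have hsqrtY : 0 < √Y := (div_pos hb hsinh).trans hsqrt
  rw [← arsinh_sinh L, arsinh_lt_arsinh, div_lt_iff₀ hsqrtY, ← div_lt_iff₀' hsinh]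
  exact hsqrt

theorem StrictAntiOn.existsUnique_eq_of_lt {f : ℝ → ℝ} {lo hi L : ℝ} (hle : lo ≤ hi)
    (hcont : ContinuousOn f (Icc lo hi)) (hanti : StrictAntiOn f (Icc lo hi))
    (hlo : L < f lo) (hhi : f hi < L) : ∃! Y, lo < Y ∧ Y < hi ∧ f Y = L := by
  obtain ⟨Y, hY, hfY⟩ := intermediate_value_Ioo' hle hcont ⟨hhi, hlo⟩
  refine ⟨Y, ⟨hY.1, hY.2, hfY⟩, fun Y' ⟨hlo', hhi', hfY'⟩ => ?_⟩
  exact hanti.injOn ⟨hlo'.le, hhi'.le⟩ (Ioo_subset_Icc_self hY) (hfY'.trans hfY.symm)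

theorem gap_equation_exists_unique_general
    (kB hbar ωD U0 N0 ε Tc : ℝ)
    (hkB : 0 < kB) (hε : 0 < ε)
    (hcut : 2*kB*Tc*ε < hbar*ωD)
    (hTcdef : (∫ η in ε..(hbar*ωD/(2*kB*Tc)), Real.tanh η / η) = 1/(U0*N0)) :
    ∀ T : ℝ, 0 < T → T < Tc →
      ∃! Y : ℝ, 0 < Y ∧ Y < 2*(hbar*ωD/Real.sinh (1/(U0*N0)))^2 ∧
        (∫ ξ in (2*kB*Tc*ε)..(hbar*ωD),
          (1/Real.sqrt (ξ^2+Y)) * Real.tanh (Real.sqrt (ξ^2+Y)/(2*kB*T)))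
          = 1/(U0*N0) := by
  intro T hT hTTc
  set L := 1 / (U0 * N0)
  set b := hbar * ωD
  set d := 2 * kB * Tc
  have hc : 0 < 2 * kB * T := by positivity
  have hcd : 2 * kB * T < d := mul_lt_mul_of_pos_left hTTc (by positivity)
  have hd : 0 < d := hc.trans hcd
  have ha : 0 < d * ε := mul_pos hd hε
  have hTc : ∫ ξ in d * ε..b, tanh (ξ / d) / ξ = L := by
    rwa [integral_tanh_div_comp hd.ne', mul_div_cancel_left₀ ε hd.ne']
  have hL : 0 < L := hTc ▸ integral_tanh_div_pos ha hcut hd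
  have hM : (b / sinh L) ^ 2 < 2 * (b / sinh L) ^ 2 := by
    have : 0 < b / sinh L := div_pos (ha.trans hcut) (sinh_pos_iff.2 hL)
    nlinarith
  have hM0 : 0 < 2 * (b / sinh L) ^ 2 := (sq_nonneg _).trans_lt hM
  exact StrictAntiOn.existsUnique_eq_of_lt (f := gapIntegral (d * ε) b (2 * kB * T)) hM0.le
    ((continuousOn_gapIntegral ha hcut.le).mono Icc_subset_Ici_self)
    ((gapIntegral_strictAntiOn ha hcut hc).mono Icc_subset_Ici_self)
    (hTc ▸ integral_tanh_div_lt_gapIntegral_zero ha hcut hc hcd)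
    ((gapIntegral_lt_arsinh ha hcut.le hM0).trans
      (arsinh_div_sqrt_lt (ha.trans hcut) hL hM))

/-- For each `0 < T < T_c` there is a unique `Y = f(T)` with `0 < Y < 2Δ₀²` solving
the gap equation, where `T_c` is defined by
`∫_ε^{ℏω_D/(2k_BT_c)} tanh η/η dη = 1/(U₀N₀)`. -/
theorem gap_equation_exists_unique
    (kB hbar ωD U0 N0 ε Tc : ℝ)
    (hkB : 0 < kB) (hhbar : 0 < hbar) (hωD : 0 < ωD)
    (hU0 : 0 < U0) (hN0 : 0 < N0) (hε : 0 < ε) (hTc : 0 < Tc)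
    (hcut : 2*kB*Tc*ε < hbar*ωD)
    (hTcdef : (∫ η in ε..(hbar*ωD/(2*kB*Tc)), Real.tanh η / η) = 1/(U0*N0)) :
    ∀ T : ℝ, 0 < T → T < Tc →
      ∃! Y : ℝ, 0 < Y ∧ Y < 2*(hbar*ωD/Real.sinh (1/(U0*N0)))^2 ∧
        (∫ ξ in (2*kB*Tc*ε)..(hbar*ωD),
          (1/Real.sqrt (ξ^2+Y)) * Real.tanh (Real.sqrt (ξ^2+Y)/(2*kB*T)))
          = 1/(U0*N0) :=
  gap_equation_exists_unique_general kB hbar ωD U0 N0 ε Tc hkB hε hcut hTcdef
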